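/- arXiv:math/0203274 — 3 statements merged into one kernel-verified Lean document; each statement's English description precedes it below -/
import Mathlib

section
/- Let (A, d : A → Ω¹) be a differential ring and let (M₁, ∇₁), (M₂, ∇₂) be A-A-bimodules with biconnections, where ∇₁ has volte φ(∇₁) : M₁ ⊗_A Ω¹ → Ω¹ ⊗_A M₁. Then ∇ := ∇₁ ⊗ id₂ + (φ(∇₁) ⊗ id₂) ∘ (id₁ ⊗ ∇₂) is a well-defined connection on M₁ ⊗_A M₂ satisfying the left Leibniz rule ∇(a·(m₁⊗m₂)) = a·∇(m₁⊗m₂) + da ⊗ (m₁⊗m₂); it is a biconnection with volte φ(∇) = (φ(∇₁) ⊗ id₂) ∘ (id₁ ⊗ φ(∇₂)). -/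
open TensorProduct

/-- A (left) connection relative to the differential ring `(A, d : A → Ω)`,
where the `Module A Ω` instance is the right action of the bimodule `Ω` and
`l` gives the left action. -/
def IsConnection {A : Type*} [CommRing A] {Ω : Type*} [AddCommGroup Ω] [Module A Ω]
    (l : A →+* Module.End A Ω) (d : A →+ Ω)
    {M : Type*} [AddCommGroup M] [Module A M]
    (nab : M →+ Ω ⊗[A] M) : Prop :=
  ∀ (a : A) (m : M),
    nab (a • m) = LinearMap.rTensor M (l a) (nab m) + d a ⊗ₜ[A] m

/-- `φ` is the volte of the biconnection `nab`: a bimodule homomorphism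
`M ⊗_A Ω → Ω ⊗_A M` measuring the defect of the right Leibniz rule. -/
def IsVolte {A : Type*} [CommRing A] {Ω : Type*} [AddCommGroup Ω] [Module A Ω]
    (l : A →+* Module.End A Ω) (d : A →+ Ω)
    {M : Type*} [AddCommGroup M] [Module A M]
    (nab : M →+ Ω ⊗[A] M) (φ : M ⊗[A] Ω →ₗ[A] Ω ⊗[A] M) : Prop :=
  (∀ (a : A) (m : M) (ω : Ω), φ ((a • m) ⊗ₜ[A] ω) = φ (m ⊗ₜ[A] l a ω)) ∧
  (∀ (a : A) (m : M) (ω : Ω),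
    φ (m ⊗ₜ[A] l a ω) = LinearMap.rTensor M (l a) (φ (m ⊗ₜ[A] ω))) ∧
  (∀ (a : A) (m : M), nab (a • m) = a • nab m + φ (m ⊗ₜ[A] d a))

/-- The auxiliary map `(φ ⊗ id) ∘ assoc⁻¹ : M ⊗ (Ω ⊗ N) → Ω ⊗ (M ⊗ N)`. -/
noncomputable def twistAux {A : Type*} [CommRing A] {Ω : Type*} [AddCommGroup Ω] [Module A Ω]
    {M N : Type*} [AddCommGroup M] [Module A M] [AddCommGroup N] [Module A N]
    (φ : M ⊗[A] Ω →ₗ[A] Ω ⊗[A] M) (x : M ⊗[A] (Ω ⊗[A] N)) :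
    Ω ⊗[A] (M ⊗[A] N) :=
  (TensorProduct.assoc A Ω M N)
    ((LinearMap.rTensor N φ) ((TensorProduct.assoc A M Ω N).symm x))

section Aux

variable {A : Type*} [CommRing A] {Ω : Type*} [AddCommGroup Ω] [Module A Ω]
    {M N : Type*} [AddCommGroup M] [Module A M] [AddCommGroup N] [Module A N]

/-- `twistAux` as a linear map. -/
noncomputable def twistL (φ : M ⊗[A] Ω →ₗ[A] Ω ⊗[A] M) :
    M ⊗[A] (Ω ⊗[A] N) →ₗ[A] Ω ⊗[A] (M ⊗[A] N) :=
  (TensorProduct.assoc A Ω M N).toLinearMap ∘ₗ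
    LinearMap.rTensor N φ ∘ₗ (TensorProduct.assoc A M Ω N).symm.toLinearMap

lemma twistAux_eq (φ : M ⊗[A] Ω →ₗ[A] Ω ⊗[A] M) (x : M ⊗[A] (Ω ⊗[A] N)) :
    twistAux φ x = twistL φ x := rfl

lemma twistL_tmul (φ : M ⊗[A] Ω →ₗ[A] Ω ⊗[A] M) (m : M) (ω : Ω) (n : N) :
    twistL φ (m ⊗ₜ[A] (ω ⊗ₜ[A] n)) = (TensorProduct.assoc A Ω M N) (φ (m ⊗ₜ[A] ω) ⊗ₜ[A] n) := by
  simp [twistL]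

lemma assoc_rT (f : Ω →ₗ[A] Ω) (x : (Ω ⊗[A] M) ⊗[A] N) :
    (TensorProduct.assoc A Ω M N) ((LinearMap.rTensor N (LinearMap.rTensor M f)) x)
      = LinearMap.rTensor (M ⊗[A] N) f ((TensorProduct.assoc A Ω M N) x) := by
  have h : (TensorProduct.assoc A Ω M N).toLinearMap ∘ₗ
      LinearMap.rTensor N (LinearMap.rTensor M f)
        = LinearMap.rTensor (M ⊗[A] N) f ∘ₗ (TensorProduct.assoc A Ω M N).toLinearMap := by
    apply TensorProduct.ext_threefold
    intro x y z
    simp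
  exact LinearMap.congr_fun h x

variable (l : A →+* Module.End A Ω) (d : A →+ Ω)
    (nab : M →+ Ω ⊗[A] M) (φ : M ⊗[A] Ω →ₗ[A] Ω ⊗[A] M)

lemma twistL_smul_left (hv : IsVolte l d nab φ) (a : A) (m : M) (x : Ω ⊗[A] N) :
    twistL φ ((a • m) ⊗ₜ[A] x) = twistL (N := N) φ (m ⊗ₜ[A] (LinearMap.rTensor N (l a)) x) := by
  induction x using TensorProduct.induction_on with
  | zero => simp
  | tmul ω n => rw [LinearMap.rTensor_tmul, twistL_tmul, twistL_tmul, hv.1 a m ω]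
  | add x y hx hy => simp only [tmul_add, map_add, hx, hy]

lemma twistL_rT (hv : IsVolte l d nab φ) (a : A) (m : M) (x : Ω ⊗[A] N) :
    twistL (N := N) φ (m ⊗ₜ[A] (LinearMap.rTensor N (l a)) x)
      = LinearMap.rTensor (M ⊗[A] N) (l a) (twistL φ (m ⊗ₜ[A] x)) := by
  induction x using TensorProduct.induction_on with
  | zero => simp
  | tmul ω n =>
    rw [LinearMap.rTensor_tmul, twistL_tmul, twistL_tmul, hv.2.1 a m ω]
    have h := assoc_rT (M := M) (N := N) (l a) (φ (m ⊗ₜ[A] ω) ⊗ₜ[A] n)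
    rw [LinearMap.rTensor_tmul] at h
    exact h
  | add x y hx hy => simp only [tmul_add, map_add, hx, hy]

end Aux

/-- Tensor product of biconnections: the rule
`∇ = ∇₁ ⊗ id₂ + (φ(∇₁) ⊗ id₂) ∘ (id₁ ⊗ ∇₂)` defines a (unique) connection on
`M₁ ⊗_A M₂`, and it is a biconnection with volte
`(φ(∇₁) ⊗ id₂) ∘ (id₁ ⊗ φ(∇₂))`. -/
theorem stmt10 {A : Type*} [CommRing A] {Ω : Type*} [AddCommGroup Ω] [Module A Ω]
    (l : A →+* Module.End A Ω) (d : A →+ Ω)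
    (hd : ∀ a b : A, d (a * b) = l a (d b) + b • d a)
    {M₁ M₂ : Type*} [AddCommGroup M₁] [Module A M₁] [AddCommGroup M₂] [Module A M₂]
    (nab₁ : M₁ →+ Ω ⊗[A] M₁) (nab₂ : M₂ →+ Ω ⊗[A] M₂)
    (φ₁ : M₁ ⊗[A] Ω →ₗ[A] Ω ⊗[A] M₁) (φ₂ : M₂ ⊗[A] Ω →ₗ[A] Ω ⊗[A] M₂)
    (h₁ : IsConnection l d nab₁) (h₂ : IsConnection l d nab₂)
    (hv₁ : IsVolte l d nab₁ φ₁) (hv₂ : IsVolte l d nab₂ φ₂) :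
    ∃ nab : M₁ ⊗[A] M₂ →+ Ω ⊗[A] (M₁ ⊗[A] M₂),
      (∀ (m₁ : M₁) (m₂ : M₂),
        nab (m₁ ⊗ₜ[A] m₂) =
          (TensorProduct.assoc A Ω M₁ M₂) ((nab₁ m₁) ⊗ₜ[A] m₂)
            + twistAux φ₁ (m₁ ⊗ₜ[A] nab₂ m₂)) ∧
      IsConnection l d nab ∧
      (∀ nab' : M₁ ⊗[A] M₂ →+ Ω ⊗[A] (M₁ ⊗[A] M₂),
        (∀ (m₁ : M₁) (m₂ : M₂),
          nab' (m₁ ⊗ₜ[A] m₂) =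
            (TensorProduct.assoc A Ω M₁ M₂) ((nab₁ m₁) ⊗ₜ[A] m₂)
              + twistAux φ₁ (m₁ ⊗ₜ[A] nab₂ m₂)) → nab' = nab) ∧
      ∃ φ : (M₁ ⊗[A] M₂) ⊗[A] Ω →ₗ[A] Ω ⊗[A] (M₁ ⊗[A] M₂),
        IsVolte l d nab φ ∧
        ∀ (m₁ : M₁) (m₂ : M₂) (ω : Ω),
          φ ((m₁ ⊗ₜ[A] m₂) ⊗ₜ[A] ω)
            = twistAux φ₁ (m₁ ⊗ₜ[A] φ₂ (m₂ ⊗ₜ[A] ω)) := by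
  classical
  -- the bilinear (additive) rule
  set F : M₁ →+ M₂ →+ Ω ⊗[A] (M₁ ⊗[A] M₂) :=
    AddMonoidHom.mk' (fun m₁ => AddMonoidHom.mk' (fun m₂ =>
        (TensorProduct.assoc A Ω M₁ M₂) ((nab₁ m₁) ⊗ₜ[A] m₂)
          + twistL φ₁ (m₁ ⊗ₜ[A] nab₂ m₂))
        (by
          intro x y
          simp only [map_add, tmul_add]
          abel))
      (by
        intro x y
        ext m₂
        simp only [AddMonoidHom.mk'_apply, AddMonoidHom.add_apply, map_add, add_tmul]
        abel) with hFdef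
  have hFapp : ∀ (m₁ : M₁) (m₂ : M₂),
      F m₁ m₂ = (TensorProduct.assoc A Ω M₁ M₂) ((nab₁ m₁) ⊗ₜ[A] m₂)
          + twistL φ₁ (m₁ ⊗ₜ[A] nab₂ m₂) := fun _ _ => rfl
  have hF : ∀ (a : A) (m₁ : M₁) (m₂ : M₂), F (a • m₁) m₂ = F m₁ (a • m₂) := by
    intro a m₁ m₂
    rw [hFapp, hFapp, hv₁.2.2 a m₁, h₂ a m₂, add_tmul, map_add,
      twistL_smul_left l d nab₁ φ₁ hv₁, tmul_smul, tmul_add, map_add, twistL_tmul,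
      smul_tmul', ← smul_tmul', map_smul]
    abel
  set nab : M₁ ⊗[A] M₂ →+ Ω ⊗[A] (M₁ ⊗[A] M₂) := TensorProduct.liftAddHom F hF with hnabdef
  have hnab : ∀ (m₁ : M₁) (m₂ : M₂),
      nab (m₁ ⊗ₜ[A] m₂) = (TensorProduct.assoc A Ω M₁ M₂) ((nab₁ m₁) ⊗ₜ[A] m₂)
          + twistL φ₁ (m₁ ⊗ₜ[A] nab₂ m₂) := by
    intro m₁ m₂
    rw [hnabdef, TensorProduct.liftAddHom_tmul, hFapp]
  refine ⟨nab, ?_, ?_, ?_, ?_⟩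
  · intro m₁ m₂
    rw [hnab, twistAux_eq]
  · -- connection
    intro a t
    induction t using TensorProduct.induction_on with
    | zero => simp
    | tmul m₁ m₂ =>
      rw [smul_tmul', hnab, hnab, h₁ a m₁, add_tmul, map_add,
        twistL_smul_left l d nab₁ φ₁ hv₁, twistL_rT l d nab₁ φ₁ hv₁,
        TensorProduct.assoc_tmul, map_add]
      have h := assoc_rT (M := M₁) (N := M₂) (l a) (nab₁ m₁ ⊗ₜ[A] m₂)
      rw [LinearMap.rTensor_tmul] at h
      rw [h]
      abel
    | add x y hx hy =>
      rw [smul_add, map_add, hx, hy, map_add, map_add, tmul_add]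
      abel
  · -- uniqueness
    intro nab' h'
    apply AddMonoidHom.ext
    intro t
    induction t using TensorProduct.induction_on with
    | zero => simp
    | tmul m₁ m₂ => rw [h' m₁ m₂, hnab, twistAux_eq]
    | add x y hx hy => rw [map_add, map_add, hx, hy]
  · -- the volte
    refine ⟨twistL φ₁ ∘ₗ LinearMap.lTensor M₁ φ₂ ∘ₗ
      (TensorProduct.assoc A M₁ M₂ Ω).toLinearMap, ⟨?_, ?_, ?_⟩, ?_⟩
    · intro a t ω
      induction t using TensorProduct.induction_on with
      | zero => simp
      | tmul m₁ m₂ =>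
        rw [smul_tmul']
        simp only [LinearMap.comp_apply, LinearEquiv.coe_coe,
          TensorProduct.assoc_tmul, LinearMap.lTensor_tmul]
        rw [twistL_smul_left l d nab₁ φ₁ hv₁, ← hv₂.2.1 a m₂ ω]
      | add x y hx hy =>
        simp only [smul_add, add_tmul, map_add] at hx hy ⊢
        rw [hx, hy]
    · intro a t ω
      induction t using TensorProduct.induction_on with
      | zero => simp
      | tmul m₁ m₂ =>
        simp only [LinearMap.comp_apply, LinearEquiv.coe_coe,
          TensorProduct.assoc_tmul, LinearMap.lTensor_tmul]
        rw [hv₂.2.1 a m₂ ω, twistL_rT l d nab₁ φ₁ hv₁]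
      | add x y hx hy =>
        simp only [add_tmul, map_add] at hx hy ⊢
        rw [hx, hy]
    · intro a t
      induction t using TensorProduct.induction_on with
      | zero => simp
      | tmul m₁ m₂ =>
        rw [smul_tmul', hnab]
        have := hF a m₁ m₂
        rw [hFapp, hFapp] at this
        rw [this, hv₂.2.2 a m₂, tmul_smul, map_smul, tmul_add, map_add, tmul_smul, map_smul,
          hnab, smul_add]
        simp only [LinearMap.comp_apply, LinearEquiv.coe_coe,
          TensorProduct.assoc_tmul, LinearMap.lTensor_tmul]
        abel
      | add x y hx hy =>
        rw [smul_add, map_add, hx, hy, map_add, add_tmul, map_add, smul_add]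
        abel
    · intro m₁ m₂ ω
      simp only [LinearMap.comp_apply, LinearEquiv.coe_coe,
        TensorProduct.assoc_tmul, LinearMap.lTensor_tmul, twistAux_eq]
end

section
/- Let (A, d) be a simple differential ring (A commutative) with Ω¹ faithful and finitely generated projective as a right A-module. Then for every A-module with connection (M, ∇), the natural homomorphism A ⊗_C M^∇ → M is injective, where C = ker d is the (field of) constants and M^∇ = ker ∇. -/
open TensorProduct

/-- Suppose `(A, d)` is simple and `Ω¹` is faithful and finitely generated
projective as a right `A`-module.  Then for every module with connection
`(M, ∇)` the natural map `A ⊗_C M^∇ → M` is injective: any family of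
horizontal elements that is linearly independent over the constants `C = ker d`
remains linearly independent over `A`. -/
theorem stmt15 {A : Type*} [CommRing A] [Nontrivial A]
    {Ω : Type*} [AddCommGroup Ω] [Module A Ω]
    [Module.Finite A Ω] [Module.Projective A Ω] [FaithfulSMul A Ω]
    (l : A →+* Module.End A Ω) (d : A →+ Ω)
    (hd : ∀ a b : A, d (a * b) = l a (d b) + b • d a)
    (hsimple : ∀ I : Ideal A,
      (∀ x ∈ I, d x ∈ I • (⊤ : Submodule A Ω)) → I = ⊥ ∨ I = ⊤)
    {M : Type*} [AddCommGroup M] [Module A M]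
    (nab : M →+ Ω ⊗[A] M) (hconn : IsConnection l d nab)
    {ι : Type*} (m : ι → M) (hm : ∀ i, nab (m i) = 0)
    (hCind : ∀ (s : Finset ι) (c : ι → A), (∀ i, d (c i) = 0) →
      ∑ i ∈ s, c i • m i = 0 → ∀ i ∈ s, c i = 0) :
    ∀ (s : Finset ι) (c : ι → A), ∑ i ∈ s, c i • m i = 0 → ∀ i ∈ s, c i = 0 := by
  classical
  -- a projective splitting giving coordinate functionals
  obtain ⟨σ, hσ⟩ := (Module.projective_def (R := A) (P := Ω)).mp ‹Module.Projective A Ω›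
  have hrep : ∀ ω : Ω, ∑ x ∈ (σ ω).support, (σ ω) x • x = ω := by
    intro ω
    have h := hσ ω
    rw [Finsupp.linearCombination_apply, Finsupp.sum] at h
    simpa using h
  have hzero : ∀ ω : Ω, (∀ D : Ω →ₗ[A] A, D ω = 0) → ω = 0 := by
    intro ω h
    rw [← hrep ω]
    refine Finset.sum_eq_zero fun x _ => ?_
    have := h ((Finsupp.lapply x).comp σ)
    simp only [LinearMap.comp_apply, Finsupp.lapply_apply] at this
    rw [this, zero_smul]
  have d1 : d 1 = 0 := by
    have h := hd 1 1
    simp only [mul_one, map_one, Module.End.one_apply, one_smul] at h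
    exact right_eq_add.mp h
  -- derived relations
  have hder : ∀ (s : Finset ι) (c : ι → A), ∑ i ∈ s, c i • m i = 0 →
      ∀ D : Ω →ₗ[A] A, ∑ i ∈ s, D (d (c i)) • m i = 0 := by
    intro s c hc D
    have h1 : ∑ i ∈ s, (d (c i)) ⊗ₜ[A] m i = (0 : Ω ⊗[A] M) := by
      have h := congrArg nab hc
      rw [map_sum, map_zero] at h
      calc ∑ i ∈ s, (d (c i)) ⊗ₜ[A] m i = ∑ i ∈ s, nab (c i • m i) := by
            refine Finset.sum_congr rfl fun i _ => ?_
            rw [hconn (c i) (m i), hm, map_zero, zero_add]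
        _ = 0 := h
    have h2 : ∑ i ∈ s, D (d (c i)) • m i =
        (TensorProduct.lid A M) ((LinearMap.rTensor M D)
          (∑ i ∈ s, (d (c i)) ⊗ₜ[A] m i)) := by
      rw [map_sum, map_sum]
      simp [LinearMap.rTensor_tmul]
    rw [h1] at h2
    simpa using h2
  intro s₀ c₀ hrel₀ j₀ hj₀
  by_contra hne₀
  -- take a counterexample of minimal length
  set P : ℕ → Prop := fun n => ∃ s : Finset ι, ∃ c : ι → A, s.card = n ∧
    (∑ i ∈ s, c i • m i = 0) ∧ ∃ j ∈ s, c j ≠ 0 with hPdef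
  have hP : ∃ n, P n := ⟨s₀.card, s₀, c₀, rfl, hrel₀, j₀, hj₀, hne₀⟩
  obtain ⟨s, c, hcard, hrel, j, hjs, hcj⟩ := Nat.find_spec hP
  have hmin : ∀ k, k < Nat.find hP → ¬ P k := fun k hk => Nat.find_min hP hk
  -- the ideal of leading coefficients
  let I : Ideal A :=
    { carrier := {a | ∃ r : ι → A, (∑ i ∈ s, r i • m i = 0) ∧ r j = a}
      add_mem' := by
        rintro a b ⟨r, hr, rfl⟩ ⟨r', hr', rfl⟩
        exact ⟨r + r', by simp [add_smul, Finset.sum_add_distrib, hr, hr'], rfl⟩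
      zero_mem' := ⟨0, by simp, rfl⟩
      smul_mem' := by
        rintro a b ⟨r, hr, rfl⟩
        refine ⟨fun i => a * r i, ?_, rfl⟩
        simp only [mul_smul]
        rw [← Finset.smul_sum, hr, smul_zero] }
  have hdiff : ∀ x ∈ I, d x ∈ I • (⊤ : Submodule A Ω) := by
    rintro x ⟨r, hr, hrj⟩
    rw [← hrep (d x)]
    refine Submodule.sum_mem _ fun y _ => Submodule.smul_mem_smul ?_ trivial
    refine ⟨fun i => ((Finsupp.lapply y).comp σ) (d (r i)),
      hder s r hr ((Finsupp.lapply y).comp σ), ?_⟩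
    simp [hrj]
  rcases hsimple I hdiff with hbot | htop
  · apply hcj
    have : c j ∈ I := ⟨c, hrel, rfl⟩
    rwa [hbot, Ideal.mem_bot] at this
  · have h1 : (1 : A) ∈ I := htop ▸ Submodule.mem_top
    obtain ⟨r, hr, hrj⟩ := h1
    have hall : ∀ D : Ω →ₗ[A] A, ∀ i ∈ s, D (d (r i)) = 0 := by
      intro D
      by_contra h
      push_neg at h
      obtain ⟨k, hks, hk⟩ := h
      have hDj : D (d (r j)) = 0 := by rw [hrj, d1, map_zero]
      have hkj : k ≠ j := fun h => hk (h ▸ hDj)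
      have hrel' : ∑ i ∈ s.erase j, D (d (r i)) • m i = 0 := by
        have h0 := hder s r hr D
        rw [← Finset.add_sum_erase s _ hjs, hDj, zero_smul, zero_add] at h0
        exact h0
      refine hmin (s.erase j).card ?_ ⟨s.erase j, fun i => D (d (r i)), rfl, hrel',
        k, Finset.mem_erase.mpr ⟨hkj, hks⟩, hk⟩
      rw [← hcard]
      exact Finset.card_erase_lt_of_mem hjs
    have hconst : ∀ i ∈ s, d (r i) = 0 := fun i hi => hzero _ fun D => hall D i hi
    have h0 := hCind s (fun i => if i ∈ s then r i else 0)
      (by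
        intro i
        by_cases hi : i ∈ s
        · simp [hi, hconst i hi]
        · simp [hi])
      (by
        rw [← hr]
        exact Finset.sum_congr rfl fun i hi => by simp [hi])
      j hjs
    simp only [if_pos hjs, hrj] at h0
    exact one_ne_zero h0
end

section
/- Let (A, d) be a differential ring satisfying: A is commutative with a simple differential structure, Ω¹ = dA·A is faithful finitely generated projective as a right A-module, and d(Q(A)) ⊆ dA·Q(A), where Q(A) is the total ring of fractions and is semisimple (a finite product of fields). Then every A-module M of finite presentation carrying a connection with invertible volte is a projective A-module. -/
open TensorProduct

namespace Stmt19Aux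

noncomputable def piMap {R : Type*} [CommRing R] {M : Type*} [AddCommGroup M] [Module R M]
    {n : ℕ} (v : Fin n → M) : (Fin n → R) →ₗ[R] M :=
  ∑ t, (LinearMap.proj t).smulRight (v t)

lemma piMap_apply {R : Type*} [CommRing R] {M : Type*} [AddCommGroup M] [Module R M]
    {n : ℕ} (v : Fin n → M) (c : Fin n → R) : piMap v c = ∑ t, c t • v t := by
  simp [piMap, LinearMap.sum_apply]

lemma piMap_surjective {R : Type*} [CommRing R] {M : Type*} [AddCommGroup M] [Module R M]
    {n : ℕ} (v : Fin n → M) (hv : Submodule.span R (Set.range v) = ⊤) :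
    Function.Surjective (piMap (R := R) v) := by
  rw [← LinearMap.range_eq_top, eq_top_iff, ← hv, Submodule.span_le]
  rintro x ⟨t, rfl⟩
  exact ⟨Pi.single t 1, by simp [piMap_apply, Pi.single_apply]⟩

lemma exists_dualBasis {R : Type*} [CommRing R] {M : Type*} [AddCommGroup M] [Module R M]
    [Module.Finite R M]
    (hsplit : ∀ (n : ℕ) (π : (Fin n → R) →ₗ[R] M), Function.Surjective π →
      ∃ σ : M →ₗ[R] (Fin n → R), ∀ m, π (σ m) = m) :
    ∃ (n : ℕ) (e : Fin n → (M →ₗ[R] R)) (η : Fin n → M), ∀ m, ∑ j, e j m • η j = m := by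
  obtain ⟨n, v, hv⟩ := Module.Finite.exists_fin (R := R) (M := M)
  obtain ⟨σ, hσ⟩ := hsplit n (piMap v) (piMap_surjective v hv)
  exact ⟨n, fun j => (LinearMap.proj j) ∘ₗ σ, v, fun m => by
    simpa [piMap_apply] using hσ m⟩

lemma exists_section_of_isSemisimple {R P N : Type*} [Ring R] [AddCommGroup P] [Module R P]
    [AddCommGroup N] [Module R N] [IsSemisimpleModule R P]
    (π : P →ₗ[R] N) (hπ : Function.Surjective π) :
    ∃ σ : N →ₗ[R] P, ∀ x, π (σ x) = x := by
  obtain ⟨W, hW⟩ := exists_isCompl (LinearMap.ker π)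
  set f : W →ₗ[R] N := π ∘ₗ W.subtype with hf
  have hinj : Function.Injective f := by
    intro x y hxy
    have hmem : ((x - y : W) : P) ∈ LinearMap.ker π ⊓ W := by
      refine Submodule.mem_inf.mpr ⟨LinearMap.mem_ker.mpr ?_, (x - y).2⟩
      have : f (x - y) = 0 := by rw [map_sub, hxy, sub_self]
      exact this
    rw [hW.inf_eq_bot] at hmem
    have : (x - y : W) = 0 := Subtype.ext (by simpa using hmem)
    exact sub_eq_zero.mp this
  have hsurj : Function.Surjective f := by
    intro nx
    obtain ⟨p, hp⟩ := hπ nx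
    have hp2 : p ∈ LinearMap.ker π ⊔ W := by rw [hW.sup_eq_top]; trivial
    obtain ⟨k, hk, w, hw, rfl⟩ := Submodule.mem_sup.mp hp2
    refine ⟨⟨w, hw⟩, ?_⟩
    have : π k = 0 := hk
    simp only [hf, LinearMap.comp_apply, Submodule.coe_subtype]
    rw [← hp, map_add, this, zero_add]
  let e := LinearEquiv.ofBijective f ⟨hinj, hsurj⟩
  refine ⟨W.subtype ∘ₗ e.symm.toLinearMap, fun x => ?_⟩
  have := e.apply_symm_apply x
  exact this

lemma exists_cleared_dualBasis {A : Type*} [CommRing A] [Nontrivial A]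
    [IsSemisimpleRing (FractionRing A)]
    {M : Type*} [AddCommGroup M] [Module A M] [Module.Finite A M] :
    ∃ (s0 : A) (_ : s0 ∈ nonZeroDivisors A) (n : ℕ) (f : Fin n → (M →ₗ[A] A))
      (x : Fin n → M), ∀ m, s0 • m = ∑ i, f i m • x i := by
  classical
  set S := nonZeroDivisors A
  let Q := FractionRing A
  let MQ := LocalizedModule S M
  haveI : Module.Finite Q MQ :=
    Module.Finite.of_isLocalizedModule S (LocalizedModule.mkLinearMap S M)
  obtain ⟨n, g, y, hgy⟩ := exists_dualBasis (R := Q) (M := MQ)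
    (fun n π hπ => exists_section_of_isSemisimple π hπ)
  let mk0 : M →ₗ[A] MQ := LocalizedModule.mkLinearMap S M
  let gA : Fin n → (M →ₗ[A] Q) := fun i => ((g i).restrictScalars A) ∘ₗ mk0
  obtain ⟨r, mv, hmv⟩ := Module.Finite.exists_fin (R := A) (M := M)
  obtain ⟨s, hs⟩ := IsLocalization.exist_integer_multiples_of_finite S
    (fun p : Fin n × Fin r => gA p.1 (mv p.2))
  have hint : ∀ i m, ((s : A) • gA i) m ∈ LinearMap.range (Algebra.linearMap A Q) := by
    intro i m
    have hsub : Submodule.span A (Set.range mv) ≤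
        Submodule.comap ((s : A) • gA i) (LinearMap.range (Algebra.linearMap A Q)) := by
      rw [Submodule.span_le]
      rintro _ ⟨j, rfl⟩
      obtain ⟨cc, hcc⟩ := hs (i, j)
      exact Submodule.mem_comap.mpr ⟨cc, hcc⟩
    rw [hmv] at hsub
    exact Submodule.mem_comap.mp (hsub Submodule.mem_top)
  have hinjQ : Function.Injective (Algebra.linearMap A Q) := IsFractionRing.injective A Q
  let eA : A ≃ₗ[A] LinearMap.range (Algebra.linearMap A Q) :=
    LinearEquiv.ofInjective _ hinjQ
  let f : Fin n → (M →ₗ[A] A) := fun i =>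
    eA.symm.toLinearMap ∘ₗ (((s : A) • gA i).codRestrict _ (hint i))
  have hf : ∀ i m, algebraMap A Q (f i m) = (s : A) • gA i m := by
    intro i m
    have h1 : eA (f i m) = (((s : A) • gA i).codRestrict _ (hint i)) m := by
      simp only [f, LinearMap.comp_apply, LinearEquiv.coe_coe]
      exact eA.apply_symm_apply _
    have h2 := congrArg Subtype.val h1
    rw [LinearEquiv.ofInjective_apply] at h2
    simpa [Algebra.linearMap_apply] using h2
  have hy : ∀ i, ∃ (u : S) (z : M), (u : A) • y i = mk0 z := by
    intro i
    induction y i using LocalizedModule.induction_on with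
    | _ z u =>
      refine ⟨u, z, ?_⟩
      rw [LocalizedModule.smul'_mk]
      show LocalizedModule.mk ((u : A) • z) u = LocalizedModule.mk z 1
      rw [← Submonoid.smul_def, LocalizedModule.mk_cancel]
  choose us zs hus using hy
  let u : S := ∏ i, us i
  have hu : ∀ i, ∃ z : M, (u : A) • y i = mk0 z := by
    intro i
    refine ⟨((∏ i' ∈ Finset.univ.erase i, us i' : S) : A) • zs i, ?_⟩
    have hprod : u = us i * ∏ i' ∈ Finset.univ.erase i, us i' :=
      (Finset.mul_prod_erase _ _ (Finset.mem_univ i)).symm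
    rw [hprod, Submonoid.coe_mul, mul_comm, mul_smul, hus i, map_smul]
  choose zz hzz using hu
  have key : ∀ m, mk0 (((s : A) * (u : A)) • m) = mk0 (∑ i, f i m • zz i) := by
    intro m
    rw [map_smul, map_sum]
    have h0 : mk0 m = ∑ j, g j (mk0 m) • y j := (hgy (mk0 m)).symm
    rw [h0, Finset.smul_sum]
    refine Finset.sum_congr rfl fun j _ => ?_
    have e1 : ((s : A) * (u : A)) • (g j (mk0 m) • y j)
        = (s : A) • (g j (mk0 m) • ((u : A) • y j)) := by
      rw [mul_smul]
      congr 1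
      rw [← algebraMap_smul Q (u : A) (g j (mk0 m) • y j), ← mul_smul, mul_comm, mul_smul,
        algebraMap_smul]
    rw [e1, hzz j]
    rw [← algebraMap_smul Q (s : A) (g j (mk0 m) • mk0 (zz j)), ← mul_smul,
      ← Algebra.smul_def]
    have e2 : (s : A) • g j (mk0 m) = algebraMap A Q (f j m) := (hf j m).symm
    rw [e2, algebraMap_smul, map_smul]
  have hker : ∀ m', mk0 m' = 0 → ∃ c : S, (c : A) • m' = 0 := by
    intro m' h
    have h1 : LocalizedModule.mk m' (1 : S) = LocalizedModule.mk (0 : M) (1 : S) := by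
      rw [LocalizedModule.zero_mk]
      exact h
    rw [LocalizedModule.mk_eq] at h1
    obtain ⟨c, hc⟩ := h1
    refine ⟨c, ?_⟩
    simpa [Submonoid.smul_def] using hc
  let wlin : M →ₗ[A] M :=
    ((s : A) * (u : A)) • LinearMap.id - ∑ i, (f i).smulRight (zz i)
  have hw : ∀ m, mk0 (wlin m) = 0 := by
    intro m
    have : wlin m = ((s : A) * (u : A)) • m - ∑ i, f i m • zz i := by
      simp [wlin, LinearMap.sub_apply, LinearMap.sum_apply]
    rw [this, map_sub, key m, sub_self]
  choose cs hcs using fun j => hker (wlin (mv j)) (hw (mv j))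
  let c : S := ∏ j, cs j
  have hcw : ∀ j, ((c : A) • wlin) (mv j) = 0 := by
    intro j
    have hprod : c = cs j * ∏ j' ∈ Finset.univ.erase j, cs j' :=
      (Finset.mul_prod_erase _ _ (Finset.mem_univ j)).symm
    show (c : A) • wlin (mv j) = 0
    rw [hprod, Submonoid.coe_mul, mul_comm, mul_smul, hcs j, smul_zero]
  have hall : ∀ m, (c : A) • wlin m = 0 := by
    have hle : (⊤ : Submodule A M) ≤ LinearMap.ker ((c : A) • wlin) := by
      rw [← hmv, Submodule.span_le]
      rintro _ ⟨j, rfl⟩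
      exact LinearMap.mem_ker.mpr (hcw j)
    intro m
    exact LinearMap.mem_ker.mp (hle Submodule.mem_top)
  refine ⟨(c : A) * ((s : A) * (u : A)), mul_mem c.2 (mul_mem s.2 u.2), n, f,
    fun i => (c : A) • zz i, fun m => ?_⟩
  have h1 := hall m
  have h2 : wlin m = ((s : A) * (u : A)) • m - ∑ i, f i m • zz i := by
    simp [wlin, LinearMap.sub_apply, LinearMap.sum_apply]
  rw [h2, smul_sub, sub_eq_zero, ← mul_smul, Finset.smul_sum] at h1
  rw [h1]
  refine Finset.sum_congr rfl fun i _ => ?_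
  rw [smul_comm]

end Stmt19Aux

/-- Rigidity theorem: let `(A, d)` be a simple commutative differential ring
with `Ω¹ = dA·A` faithful finitely generated projective as a right `A`-module,
`d(Q(A)) ⊆ dA·Q(A)`, and total ring of fractions `Q(A)` semisimple.  Then
every finitely presented `A`-module carrying a connection with invertible
volte is projective. -/
theorem stmt19 {A : Type*} [CommRing A] [Nontrivial A]
    {Ω : Type*} [AddCommGroup Ω] [Module A Ω]
    [Module.Finite A Ω] [Module.Projective A Ω] [FaithfulSMul A Ω]
    [IsSemisimpleRing (FractionRing A)]
    (l : A →+* Module.End A Ω) (d : A →+ Ω)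
    (hd : ∀ a b : A, d (a * b) = l a (d b) + b • d a)
    (hred : Submodule.span A (Set.range ⇑d) = (⊤ : Submodule A Ω))
    (hsimple : ∀ I : Ideal A,
      (∀ x ∈ I, d x ∈ I • (⊤ : Submodule A Ω)) → I = ⊥ ∨ I = ⊤)
    -- `d(Q(A)) ⊆ dA·Q(A)`: denominators can be moved across `Ω¹`
    (hloc : ∀ (ω : Ω) (s : nonZeroDivisors A), ∃ (ω' : Ω) (u : nonZeroDivisors A),
      (u : A) • ω = l (s : A) ω')
    {M : Type*} [AddCommGroup M] [Module A M] [Module.FinitePresentation A M]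
    (nab : M →+ Ω ⊗[A] M)
    (hconn : ∀ (a : A) (x : M),
      nab (a • x) = LinearMap.rTensor M (l a) (nab x) + d a ⊗ₜ[A] x)
    (φ : M ⊗[A] Ω →ₗ[A] Ω ⊗[A] M)
    (hφ : IsVolte l d nab φ) (hbij : Function.Bijective ⇑φ) :
    Module.Projective A M := by
  classical
  obtain ⟨hφ1, hφ2, hφ3⟩ := hφ
  -- Step 0a: the left action coincides with the right action on `Ω ⊗ M`.
  have hF1 : ∀ (a : A) (z : Ω ⊗[A] M), LinearMap.rTensor M (l a) z = a • z := by
    intro a z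
    obtain ⟨w, rfl⟩ := hbij.2 z
    induction w using TensorProduct.induction_on with
    | zero => simp
    | tmul m ω => rw [← hφ2 a m ω, ← hφ1 a m ω, ← smul_tmul', map_smul]
    | add x y hx hy => rw [map_add, map_add, hx, hy, smul_add]
  -- Step 0b: the connection satisfies the classical Leibniz rule.
  have hF2 : ∀ (a : A) (m : M), nab (a • m) = a • nab m + d a ⊗ₜ[A] m := by
    intro a m
    rw [hconn, hF1]
  -- Step 0c: a finite dual basis for `Ω`.
  obtain ⟨N, e, η, he⟩ := Stmt19Aux.exists_dualBasis (R := A) (M := Ω)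
    (fun n π hπ => by
      obtain ⟨σ, hσ⟩ := Module.projective_lifting_property π LinearMap.id hπ
      exact ⟨σ, fun m => by rw [← LinearMap.comp_apply, hσ, LinearMap.id_apply]⟩)
  -- contraction maps
  let qe : Fin N → (Ω ⊗[A] M →ₗ[A] M) := fun j =>
    (TensorProduct.lid A M).toLinearMap ∘ₗ LinearMap.rTensor M (e j)
  have hqe : ∀ (j : Fin N) (ω : Ω) (v : M), qe j (ω ⊗ₜ[A] v) = e j ω • v := by
    intro j ω v
    simp [qe]
  let ctr : (M →ₗ[A] A) → (Ω ⊗[A] M →ₗ[A] Ω) := fun f =>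
    (TensorProduct.rid A Ω).toLinearMap ∘ₗ LinearMap.lTensor Ω f
  have hctr : ∀ (f : M →ₗ[A] A) (ω : Ω) (v : M), ctr f (ω ⊗ₜ[A] v) = f v • ω := by
    intro f ω v
    simp [ctr]
  -- Step 1: the annihilator of `M` is a differential ideal.
  have hannsmul : ∀ a : A, (∀ m : M, a • m = 0) → ∀ z : Ω ⊗[A] M, a • z = 0 := by
    intro a ha z
    induction z using TensorProduct.induction_on with
    | zero => simp
    | tmul ω v => rw [smul_tmul', smul_tmul, ha v, tmul_zero]
    | add x y hx hy => rw [smul_add, hx, hy, add_zero]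
  have hmemAnn : ∀ a : A, a ∈ Module.annihilator A M ↔ ∀ m : M, a • m = 0 := fun a =>
    Module.mem_annihilator
  have hAnnDiff : ∀ x ∈ Module.annihilator A M,
      d x ∈ Module.annihilator A M • (⊤ : Submodule A Ω) := by
    intro a ha
    have h0 : ∀ m : M, d a ⊗ₜ[A] m = 0 := by
      intro m
      have h1 := hF2 a m
      rw [(hmemAnn a).mp ha m, map_zero, hannsmul a ((hmemAnn a).mp ha) (nab m), zero_add] at h1
      exact h1.symm
    have h2 : ∀ j, e j (d a) ∈ Module.annihilator A M := by
      intro j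
      refine (hmemAnn _).mpr fun m => ?_
      rw [← hqe j, h0 m, map_zero]
    rw [show d a = ∑ j, e j (d a) • η j from (he (d a)).symm]
    exact Submodule.sum_mem _ fun j _ => Submodule.smul_mem_smul (h2 j) Submodule.mem_top
  rcases hsimple _ hAnnDiff with hbot | htop
  case inr =>
    -- `M = 0`, hence projective
    have hM0 : ∀ m : M, m = 0 := by
      intro m
      have h1 : (1 : A) ∈ Module.annihilator A M := htop ▸ Submodule.mem_top
      simpa using (hmemAnn 1).mp h1 m
    exact Module.Projective.of_split (0 : M →ₗ[A] (Fin 0 → A)) 0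
      (LinearMap.ext fun m => (hM0 m).symm)
  case inl =>
  have hann0 : ∀ a : A, (∀ m : M, a • m = 0) → a = 0 := by
    intro a ha
    have h1 : a ∈ Module.annihilator A M := (hmemAnn a).mpr ha
    rwa [hbot, Submodule.mem_bot] at h1
  -- Step 2: `e j (l b (d c)) = b * e j (d c)`.
  have hdef : ∀ (b c : A) (j : Fin N), e j (l b (d c)) = b * e j (d c) := by
    intro b c j
    have h4 : ∀ m : M, (e j (l b (d c)) - b * e j (d c)) • m = 0 := by
      intro m
      have h1 : (l b (d c)) ⊗ₜ[A] m = (b • d c) ⊗ₜ[A] m := by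
        have h2 := hF1 b (d c ⊗ₜ[A] m)
        rw [LinearMap.rTensor_tmul] at h2
        rw [h2, smul_tmul']
      have h3 := congrArg (qe j) h1
      rw [hqe, hqe, map_smul, smul_eq_mul] at h3
      rw [sub_smul, h3, sub_self]
    exact sub_eq_zero.mp (hann0 _ h4)
  -- Step 3: the trace ideal `J`.
  let J : Ideal A :=
    { carrier := {c | ∃ (k : ℕ) (h : Fin k → (M →ₗ[A] A)) (z : Fin k → M),
        ∀ m, c • m = ∑ t, h t m • z t}
      add_mem' := by
        rintro c₁ c₂ ⟨k₁, h₁, z₁, H₁⟩ ⟨k₂, h₂, z₂, H₂⟩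
        refine ⟨k₁ + k₂, Fin.append h₁ h₂, Fin.append z₁ z₂, fun m => ?_⟩
        rw [add_smul, H₁ m, H₂ m, Fin.sum_univ_add]
        congr 1
        · exact Finset.sum_congr rfl fun t _ => by rw [Fin.append_left, Fin.append_left]
        · exact Finset.sum_congr rfl fun t _ => by rw [Fin.append_right, Fin.append_right]
      zero_mem' := ⟨0, 0, 0, fun m => by simp⟩
      smul_mem' := by
        rintro r c ⟨k, h, z, H⟩
        refine ⟨k, h, fun t => r • z t, fun m => ?_⟩
        rw [smul_eq_mul, mul_smul, H m, Finset.smul_sum]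
        exact Finset.sum_congr rfl fun t _ => smul_comm r (h t m) (z t) }
  have hJmem : ∀ c : A, c ∈ J ↔ ∃ (k : ℕ) (h : Fin k → (M →ₗ[A] A)) (z : Fin k → M),
      ∀ m, c • m = ∑ t, h t m • z t := fun c => Iff.rfl
  -- Step 4: `J` is a differential ideal.
  have hJdiff : ∀ x ∈ J, d x ∈ J • (⊤ : Submodule A Ω) := by
    intro a haJ
    obtain ⟨k, h, z, H⟩ := (hJmem a).mp haJ
    have hsmul_eq : ∀ w : Ω ⊗[A] M, a • w = ∑ t, (ctr (h t) w) ⊗ₜ[A] z t := by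
      intro w
      induction w using TensorProduct.induction_on with
      | zero => simp
      | tmul ω v =>
        rw [smul_tmul', smul_tmul, H v, tmul_sum]
        exact Finset.sum_congr rfl fun t _ => by rw [hctr, smul_tmul]
      | add x y hx hy =>
        rw [smul_add, hx, hy, ← Finset.sum_add_distrib]
        exact Finset.sum_congr rfl fun t _ => by rw [map_add, add_tmul]
    have hmain : ∀ m : M, d a ⊗ₜ[A] m =
        ∑ t, h t m • nab (z t) + ∑ t, (d (h t m) - ctr (h t) (nab m)) ⊗ₜ[A] z t := by
      intro m
      have h1 : nab (a • m) = ∑ t, (h t m • nab (z t) + d (h t m) ⊗ₜ[A] z t) := by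
        rw [show a • m = ∑ t, h t m • z t from H m, map_sum]
        exact Finset.sum_congr rfl fun t _ => hF2 (h t m) (z t)
      have h2 := hF2 a m
      rw [h1, hsmul_eq (nab m)] at h2
      have h3 : ∑ t, (d (h t m) - ctr (h t) (nab m)) ⊗ₜ[A] z t
          = ∑ t, d (h t m) ⊗ₜ[A] z t - ∑ t, ctr (h t) (nab m) ⊗ₜ[A] z t := by
        rw [← Finset.sum_sub_distrib]
        exact Finset.sum_congr rfl fun t _ => sub_tmul _ _ _
      rw [Finset.sum_add_distrib] at h2
      rw [h3, ← add_sub_assoc, eq_sub_iff_add_eq, h2]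
      exact add_comm _ _
    -- the corrected dual maps
    let hΔ : Fin N → Fin k → (M →ₗ[A] A) := fun j t =>
      { toFun := fun m => e j (d (h t m)) - e j (ctr (h t) (nab m))
        map_add' := by
          intro m m'
          show e j (d (h t (m + m'))) - e j (ctr (h t) (nab (m + m')))
              = (e j (d (h t m)) - e j (ctr (h t) (nab m)))
              + (e j (d (h t m')) - e j (ctr (h t) (nab m')))
          rw [map_add (h t), map_add d, map_add (e j), map_add nab, map_add (ctr (h t)),
            map_add (e j)]
          ring
        map_smul' := by
          intro b m
          show e j (d (h t (b • m))) - e j (ctr (h t) (nab (b • m)))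
              = (RingHom.id A) b • (e j (d (h t m)) - e j (ctr (h t) (nab m)))
          simp only [RingHom.id_apply, smul_eq_mul]
          have hb : h t (b • m) = b * h t m := by rw [map_smul, smul_eq_mul]
          rw [hb, hd b (h t m), map_add (e j), hdef b (h t m) j, map_smul (e j),
            hF2 b m, map_add (ctr (h t)), map_smul (ctr (h t)), hctr,
            map_add (e j), map_smul (e j), map_smul (e j)]
          simp only [smul_eq_mul]
          ring }
    have hΔapp : ∀ j t m, hΔ j t m = e j (d (h t m)) - e j (ctr (h t) (nab m)) :=
      fun j t m => rfl
    have hdaJ : ∀ j, e j (d a) ∈ J := by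
      intro j
      refine (hJmem _).mpr ⟨k + k, Fin.append h (hΔ j),
        Fin.append (fun t => qe j (nab (z t))) z, fun m => ?_⟩
      have h5 := congrArg (qe j) (hmain m)
      rw [hqe, map_add, map_sum, map_sum] at h5
      have h6 : ∀ t : Fin k, qe j (h t m • nab (z t)) = h t m • qe j (nab (z t)) :=
        fun t => map_smul _ _ _
      have h7 : ∀ t : Fin k, qe j ((d (h t m) - ctr (h t) (nab m)) ⊗ₜ[A] z t)
          = hΔ j t m • z t := by
        intro t
        rw [hqe, hΔapp, map_sub]
      rw [Finset.sum_congr rfl (fun t _ => h6 t), Finset.sum_congr rfl (fun t _ => h7 t)] at h5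
      rw [h5, Fin.sum_univ_add]
      congr 1
      · exact Finset.sum_congr rfl fun t _ => by rw [Fin.append_left, Fin.append_left]
      · exact Finset.sum_congr rfl fun t _ => by rw [Fin.append_right, Fin.append_right]
    rw [show d a = ∑ j, e j (d a) • η j from (he (d a)).symm]
    exact Submodule.sum_mem _ fun j _ => Submodule.smul_mem_smul (hdaJ j) Submodule.mem_top
  -- Step 5: `J` is not zero.
  obtain ⟨s0, hs0S, n0, f0, x0, hs0⟩ := Stmt19Aux.exists_cleared_dualBasis (A := A) (M := M)
  have hs0J : s0 ∈ J := (hJmem _).mpr ⟨n0, f0, x0, hs0⟩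
  rcases hsimple J hJdiff with hJbot | hJtop
  · exfalso
    have h1 : s0 = 0 := by
      have h2 : s0 ∈ (⊥ : Ideal A) := hJbot ▸ hs0J
      simpa using h2
    exact nonZeroDivisors.ne_zero hs0S h1
  · have h1J : (1 : A) ∈ J := hJtop ▸ Submodule.mem_top
    obtain ⟨k, h, z, H⟩ := (hJmem _).mp h1J
    refine Module.Projective.of_split (LinearMap.pi h : M →ₗ[A] (Fin k → A))
      (Stmt19Aux.piMap z) ?_
    ext m
    have h2 : Stmt19Aux.piMap (R := A) z (LinearMap.pi h m) = ∑ t, h t m • z t := by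
      rw [Stmt19Aux.piMap_apply]
      rfl
    simp only [LinearMap.comp_apply, LinearMap.id_apply]
    rw [h2, ← H m, one_smul]
end
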